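/- Fix an integer r ≥ 1 with 2^t exactly dividing r², t = 2t′. Then A_2(1) = ∑_{α≥0} ρ_{r²}(2^α)/2^α = 3. -/

import Mathlib

/-!
Scaling by `4` gives `ρ_{4k}(4d) = 2 ρ_k(d)`, so the series `A(k) = ∑ ρ_k(2^α) / 2^α` satisfies
`A(4k) = 1 + 1/2 + A(k)/2`, whose fixed point is `3`. Writing `r = 2^s u` with `u` odd, induction on
`s` reduces the claim to `A(u²) = 3`. Since `u` is a unit modulo `2^α`, `ρ_{u²}(2^α) = ρ_1(2^α)`,
which is `1, 1, 2, 4, 4, …`: for `n ≥ 1`, `2^(n+1) ∣ (x - 1)(x + 1)` forces `x ≡ ±1 (mod 2^n)`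
because one of the two even factors is `2 (mod 4)`. Hence `A(u²) = 1 + 1/2 + 1/2 + ∑_{α≥3} 4/2^α = 3`.
-/

/-- `rho k d` counts residues `0 ≤ x < d` with `x² ≡ k (mod d)`. -/
def rho (k d : ℕ) : ℕ :=
  ((Finset.range d).filter (fun x => x ^ 2 % d = k % d)).card

open Finset Function

theorem Function.Periodic.count_mul {p : ℕ → Prop} [DecidablePred p] {a : ℕ}
    (hp : Periodic p a) (m : ℕ) : Nat.count p (a * m) = m * Nat.count p a := by
  induction m with
  | zero => simp
  | succ m ih =>
    have hshift : (fun k => p (a * m + k)) = p := by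
      funext k
      rw [add_comm, mul_comm]
      exact hp.nat_mul m k
    rw [Nat.mul_succ, Nat.count_add, ih, Nat.succ_mul]
    simp only [hshift]

theorem rho_eq_count (k d : ℕ) : rho k d = Nat.count (fun x => x ^ 2 ≡ k [MOD d]) d := by
  rw [rho, Nat.count_eq_card_filter_range]
  rfl

theorem periodic_sq_modEq (k d : ℕ) : Periodic (fun x => x ^ 2 ≡ k [MOD d]) d := fun x => by
  simp only [eq_iff_iff]
  exact ((Nat.add_modEq_right).pow 2).congr_left

theorem rho_one_right (k : ℕ) : rho k 1 = 1 := by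
  simp [rho_eq_count, Nat.count_succ, Nat.modEq_one]

theorem rho_two_right (k : ℕ) : rho k 2 = 1 := by
  rcases Nat.mod_two_eq_zero_or_one k with h | h <;> simp only [rho, h] <;> decide

theorem rho_sq_mul_sq {e : ℕ} (he : e ≠ 0) (k d : ℕ) :
    rho (e ^ 2 * k) (e ^ 2 * d) = e * rho k d := by
  have hdvd : ∀ x, x ^ 2 ≡ e ^ 2 * k [MOD e ^ 2 * d] → e ∣ x := fun x hx =>
    (Nat.pow_dvd_pow_iff two_ne_zero).1 <|
      (hx.dvd_iff (dvd_mul_right _ _)).2 (dvd_mul_right _ _)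
  have hsol : {x ∈ range (e ^ 2 * d) | x ^ 2 ≡ e ^ 2 * k [MOD e ^ 2 * d]}
      = {w ∈ range (d * e) | w ^ 2 ≡ k [MOD d]}.map ⟨(e * ·), mul_right_injective₀ he⟩ := by
    ext x
    simp only [mem_filter, mem_range, mem_map, Embedding.coeFn_mk]
    constructor
    · rintro ⟨hx, hsq⟩
      obtain ⟨w, rfl⟩ := hdvd x hsq
      refine ⟨w, ⟨?_, ?_⟩, rfl⟩
      · nlinarith [Nat.pos_of_ne_zero he]
      · rwa [mul_pow, Nat.ModEq.mul_left_cancel_iff' (pow_ne_zero 2 he)] at hsq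
    · rintro ⟨w, ⟨hw, hsq⟩, rfl⟩
      refine ⟨by nlinarith [Nat.pos_of_ne_zero he], ?_⟩
      rwa [mul_pow, Nat.ModEq.mul_left_cancel_iff' (pow_ne_zero 2 he)]
  rw [rho_eq_count, Nat.count_eq_card_filter_range, hsol, card_map,
    ← Nat.count_eq_card_filter_range, (periodic_sq_modEq k d).count_mul, rho_eq_count]

theorem rho_eq_card_zmod (k d : ℕ) [NeZero d] : rho k d = #{x : ZMod d | x ^ 2 = k} := by
  refine card_bij' (fun x _ => (x : ZMod d)) (fun x _ => x.val) ?_ ?_ ?_ ?_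
  · intro x hx
    simp only [mem_filter, mem_range, mem_univ, true_and] at hx ⊢
    exact_mod_cast (ZMod.natCast_eq_natCast_iff' _ _ _).2 hx.2
  · intro x hx
    simp only [mem_filter, mem_range, mem_univ, true_and] at hx ⊢
    refine ⟨ZMod.val_lt x, (ZMod.natCast_eq_natCast_iff' _ _ _).1 ?_⟩
    simpa using hx
  · intro x hx
    exact ZMod.val_natCast_of_lt (mem_range.1 (mem_filter.1 hx).1)
  · intro x _
    exact ZMod.natCast_zmod_val x

theorem rho_mul_sq_of_coprime {u d : ℕ} (k : ℕ) (hu : u.Coprime d) :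
    rho (k * u ^ 2) d = rho k d := by
  rcases eq_or_ne d 0 with rfl | hd
  · rfl
  have : NeZero d := ⟨hd⟩
  rw [rho_eq_card_zmod, rho_eq_card_zmod]
  refine (card_equiv (Units.mulRight (ZMod.unitOfCoprime u hu)) fun x => ?_).symm
  have hunit : IsUnit ((u : ZMod d) ^ 2) := (ZMod.unitOfCoprime u hu).isUnit.pow 2
  simp [mul_pow, hunit.mul_left_inj]

theorem Int.two_pow_dvd_mul_add_one_iff {c : ℤ} {n : ℕ} :
    2 ^ n ∣ c * (c + 1) ↔ 2 ^ n ∣ c ∨ 2 ^ n ∣ c + 1 := by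
  refine ⟨fun h => ?_, fun h => h.elim (·.mul_right _) (·.mul_left _)⟩
  rcases Int.even_or_odd c with hc | hc
  · have : IsCoprime ((2 : ℤ) ^ n) (c + 1) :=
      (Int.prime_two.coprime_iff_not_dvd.2 (by rw [← even_iff_two_dvd]; simpa using hc)).pow_left
    exact .inl (this.dvd_of_dvd_mul_right h)
  · have : IsCoprime ((2 : ℤ) ^ n) c :=
      (Int.prime_two.coprime_iff_not_dvd.2 (by rw [← even_iff_two_dvd]; simpa using hc)).pow_left
    exact .inr (this.dvd_of_dvd_mul_left h)

theorem Int.two_pow_succ_dvd_sq_sub_one_iff {x : ℤ} {n : ℕ} (hn : n ≠ 0) :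
    2 ^ (n + 1) ∣ x ^ 2 - 1 ↔ 2 ^ n ∣ x - 1 ∨ 2 ^ n ∣ x + 1 := by
  obtain ⟨m, rfl⟩ := Nat.exists_eq_succ_of_ne_zero hn
  rcases Int.even_or_odd' x with ⟨c, rfl | rfl⟩
  · have hodd : ∀ y : ℤ, Odd y → ∀ k, ¬ 2 ^ (k + 1) ∣ y := fun y hy k h =>
      Int.not_even_iff_odd.2 hy (even_iff_two_dvd.2 ((dvd_pow_self 2 k.succ_ne_zero).trans h))
    refine iff_of_false (hodd _ ⟨2 * c ^ 2 - 1, by ring⟩ _) ?_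
    rintro (h | h)
    exacts [hodd _ ⟨c - 1, by ring⟩ _ h, hodd _ ⟨c, by ring⟩ _ h]
  · have hsq : (2 * c + 1) ^ 2 - 1 = 2 ^ 2 * (c * (c + 1)) := by ring
    have hsub : 2 * c + 1 - 1 = 2 * c := by ring
    have hadd : 2 * c + 1 + 1 = 2 * (c + 1) := by ring
    rw [hsq, hsub, hadd, pow_succ' _ (m + 1), pow_succ' _ m, ← mul_assoc, ← sq,
      mul_dvd_mul_iff_left (by norm_num), mul_dvd_mul_iff_left (by norm_num),
      mul_dvd_mul_iff_left (by norm_num), Int.two_pow_dvd_mul_add_one_iff]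

theorem Nat.sq_modEq_one_two_pow_succ_iff {x n : ℕ} (hn : n ≠ 0) :
    x ^ 2 ≡ 1 [MOD 2 ^ (n + 1)] ↔ x ≡ 1 [MOD 2 ^ n] ∨ 2 ^ n ∣ x + 1 := by
  rw [Nat.ModEq.comm (a := x ^ 2), Nat.ModEq.comm (a := x), Nat.modEq_iff_dvd, Nat.modEq_iff_dvd,
    ← Int.natCast_dvd_natCast]
  push_cast
  exact Int.two_pow_succ_dvd_sq_sub_one_iff hn

theorem rho_one_two_pow {n : ℕ} (hn : 2 ≤ n) : rho 1 (2 ^ (n + 1)) = 4 := by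
  have hper : Periodic (fun x => x ≡ 1 [MOD 2 ^ n] ∨ 2 ^ n ∣ x + 1) (2 ^ n) := fun x => by
    simp only [Nat.ModEq, Nat.add_mod_right, add_right_comm x, Nat.dvd_add_self_right]
  have h4 : 4 ≤ 2 ^ n := by
    calc 4 = 2 ^ 2 := by norm_num
      _ ≤ 2 ^ n := Nat.pow_le_pow_right two_pos hn
  have hbase : {x ∈ range (2 ^ n) | x ≡ 1 [MOD 2 ^ n] ∨ 2 ^ n ∣ x + 1} = {1, 2 ^ n - 1} := by
    ext x
    simp only [mem_filter, mem_range, mem_insert, mem_singleton]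
    constructor
    · rintro ⟨hx, h | h⟩
      · exact .inl (h.eq_of_lt_of_lt hx (by omega))
      · have := Nat.le_of_dvd (by omega) h
        omega
    · rintro (rfl | rfl)
      · exact ⟨by omega, .inl rfl⟩
      · exact ⟨by omega, .inr ⟨1, by omega⟩⟩
  rw [rho_eq_count]
  simp only [Nat.sq_modEq_one_two_pow_succ_iff (show n ≠ 0 by omega)]
  rw [pow_succ, hper.count_mul, Nat.count_eq_card_filter_range, hbase, card_pair (by omega)]

theorem hasSum_rho_one_two_pow : HasSum (fun n : ℕ => (rho 1 (2 ^ n) : ℝ) / 2 ^ n) 3 := by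
  have hhead : ∑ i ∈ range 3, (rho 1 (2 ^ i) : ℝ) / 2 ^ i = 2 := by
    simp only [sum_range_succ, sum_range_zero, pow_zero, pow_one, rho_one_right, rho_two_right,
      show rho 1 (2 ^ 2) = 2 by decide]
    norm_num
  have htail : ∀ n : ℕ, (rho 1 (2 ^ (n + 3)) : ℝ) / 2 ^ (n + 3) = 1 / 2 / 2 ^ n := fun n => by
    rw [rho_one_two_pow (n := n + 2) (by omega)]
    push_cast
    ring
  rw [← hasSum_nat_add_iff' 3, hhead, show (3 : ℝ) - 2 = 1 by norm_num]
  simpa only [htail] using hasSum_geometric_two' 1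

theorem hasSum_rho_sq_of_odd {u : ℕ} (hu : Odd u) :
    HasSum (fun n : ℕ => (rho (u ^ 2) (2 ^ n) : ℝ) / 2 ^ n) 3 := by
  have hrho : ∀ n : ℕ, rho (u ^ 2) (2 ^ n) = rho 1 (2 ^ n) := fun n => by
    simpa using rho_mul_sq_of_coprime 1 (hu.coprime_two_right.pow_right n)
  simpa only [hrho] using hasSum_rho_one_two_pow

theorem hasSum_rho_four_mul {k : ℕ} {S : ℝ}
    (h : HasSum (fun n : ℕ => (rho k (2 ^ n) : ℝ) / 2 ^ n) S) :
    HasSum (fun n : ℕ => (rho (4 * k) (2 ^ n) : ℝ) / 2 ^ n) (3 / 2 + S / 2) := by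
  rw [← hasSum_nat_add_iff' 2]
  have hshift : ∀ n : ℕ,
      (rho (4 * k) (2 ^ (n + 2)) : ℝ) / 2 ^ (n + 2) = (rho k (2 ^ n) : ℝ) / 2 ^ n / 2 := fun n => by
    rw [pow_add, mul_comm (2 ^ n), show 4 = 2 ^ 2 from rfl, rho_sq_mul_sq two_ne_zero]
    push_cast
    ring
  have hhead : ∑ i ∈ range 2, (rho (4 * k) (2 ^ i) : ℝ) / 2 ^ i = 3 / 2 := by
    simp only [sum_range_succ, sum_range_zero, pow_zero, pow_one, rho_one_right, rho_two_right]
    norm_num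
  rw [hhead, add_sub_cancel_left]
  simpa only [hshift] using h.div_const 2

theorem hasSum_rho_sq {r : ℕ} (hr : r ≠ 0) :
    HasSum (fun n : ℕ => (rho (r ^ 2) (2 ^ n) : ℝ) / 2 ^ n) 3 := by
  obtain ⟨s, u, hu, rfl⟩ := Nat.exists_eq_two_pow_mul_odd hr
  clear hr
  induction s with
  | zero => simpa using hasSum_rho_sq_of_odd hu
  | succ s ih =>
    rw [show (2 ^ (s + 1) * u) ^ 2 = 4 * (2 ^ s * u) ^ 2 by ring]
    convert hasSum_rho_four_mul ih using 1
    norm_num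

theorem stmt_8_general (r : ℕ) (hr : 1 ≤ r) :
    (∑' α : ℕ, (rho (r ^ 2) (2 ^ α) : ℝ) / 2 ^ α) = 3 :=
  (hasSum_rho_sq (by omega)).tsum_eq

theorem stmt_8 (r : ℕ) (hr : 1 ≤ r) (t t' : ℕ) (ht : t = 2 * t')
    (hdvd : 2 ^ t ∣ r ^ 2) (hndvd : ¬ 2 ^ (t + 1) ∣ r ^ 2) :
    (∑' α : ℕ, (rho (r ^ 2) (2 ^ α) : ℝ) / 2 ^ α) = 3 :=
  stmt_8_general r hr
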